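/- arXiv:1004.2435 — 2 statements merged into one kernel-verified Lean document; each statement's English description precedes it below -/
import Mathlib

section
/- For every s ≥ 1, the commutator subgroup inclusion [J_n^s, J_n^t] ⊆ J_n^{s+t} holds; in particular each quotient J_n^s/J_n^{s+1} is abelian. -/
/-- The lower central series is preserved by any automorphism. -/
theorem lcs_map_eq {G : Type*} [Group G] (e : G ≃* G) (s : ℕ) :
    Subgroup.map e.toMonoidHom ((⊤ : Subgroup G).lowerCentralSeries s) = (⊤ : Subgroup G).lowerCentralSeries s := by
  apply le_antisymm (Subgroup.lowerCentralSeries.map e.toMonoidHom s)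
  have h2 := Subgroup.lowerCentralSeries.map (e.symm.toMonoidHom) s
  have h3 := Subgroup.map_mono (f := e.toMonoidHom) h2
  rw [Subgroup.map_map] at h3
  rw [show ((e.toMonoidHom).comp e.symm.toMonoidHom) = MonoidHom.id G from by
      ext x; simp, Subgroup.map_id] at h3
  exact h3

/-- The natural homomorphism `Aut(G) → Aut(G/Γ^{s+1} G)`, where
`Γ^{s+1} G = lowerCentralSeries G s` (so `Γ^1 G = lowerCentralSeries G 0 = G`). -/
def autQuotMap (G : Type*) [Group G] (s : ℕ) :
    MulAut G →* MulAut (G ⧸ (⊤ : Subgroup G).lowerCentralSeries s) where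
  toFun e := QuotientGroup.congr _ _ e (lcs_map_eq e s)
  map_one' := by ext x; induction x using QuotientGroup.induction_on; rfl
  map_mul' e₁ e₂ := by ext x; induction x using QuotientGroup.induction_on; rfl

/-- The `s`-th Johnson filtration subgroup `J_n^s` of `Aut(F_n)`: the kernel of
the natural map `Aut(F_n) → Aut(F_n/Γ^{s+1} F_n)`.  (In Mathlib indexing,
`Γ^{s+1} F_n = lowerCentralSeries (FreeGroup (Fin n)) s`.) -/
def JohnsonFiltration (n s : ℕ) : Subgroup (MulAut (FreeGroup (Fin n))) :=
  (autQuotMap (FreeGroup (Fin n)) s).ker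

open scoped commutatorElement

section Aux
variable {G : Type*} [Group G]

lemma lcs_succ' (n : ℕ) : (⊤ : Subgroup G).lowerCentralSeries (n+1) = ⁅(⊤ : Subgroup G).lowerCentralSeries n, ⊤⁆ := rfl

/-- Three subgroups lemma with target a normal subgroup. -/
lemma comm3_le (A B C N : Subgroup G) [N.Normal]
    (h1 : ⁅⁅B, C⁆, A⁆ ≤ N) (h2 : ⁅⁅C, A⁆, B⁆ ≤ N) : ⁅⁅A, B⁆, C⁆ ≤ N := by
  have key : ∀ X Y Z : Subgroup G, ⁅⁅X, Y⁆, Z⁆ ≤ N ↔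
      ⁅⁅X.map (QuotientGroup.mk' N), Y.map (QuotientGroup.mk' N)⁆,
        Z.map (QuotientGroup.mk' N)⁆ = ⊥ := by
    intro X Y Z
    rw [← Subgroup.map_commutator, ← Subgroup.map_commutator,
      Subgroup.map_eq_bot_iff, QuotientGroup.ker_mk']
  rw [key]
  exact Subgroup.commutator_commutator_eq_bot_of_rotate ((key _ _ _).mp h1) ((key _ _ _).mp h2)

/-- `⁅γ_{m+1}, γ_{n+1}⁆ ≤ γ_{m+n+2}` in Mathlib indexing. -/
lemma lcs_comm : ∀ (n m : ℕ),
    ⁅(⊤ : Subgroup G).lowerCentralSeries m, (⊤ : Subgroup G).lowerCentralSeries n⁆ ≤ (⊤ : Subgroup G).lowerCentralSeries (m + n + 1) := by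
  intro n
  induction n with
  | zero =>
    intro m
    rw [Subgroup.lowerCentralSeries_zero, ← lcs_succ']
  | succ n ih =>
    intro m
    rw [lcs_succ', Subgroup.commutator_comm]
    have harith : m + 1 + n + 1 = m + (n + 1) + 1 := by omega
    apply comm3_le
    · calc ⁅⁅(⊤ : Subgroup G), (⊤ : Subgroup G).lowerCentralSeries m⁆, (⊤ : Subgroup G).lowerCentralSeries n⁆
          = ⁅(⊤ : Subgroup G).lowerCentralSeries (m+1), (⊤ : Subgroup G).lowerCentralSeries n⁆ := by
            rw [Subgroup.commutator_comm (⊤ : Subgroup G), ← lcs_succ']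
      _ ≤ (⊤ : Subgroup G).lowerCentralSeries (m + 1 + n + 1) := ih (m+1)
      _ = (⊤ : Subgroup G).lowerCentralSeries (m + (n+1) + 1) := by rw [harith]
    · calc ⁅⁅(⊤ : Subgroup G).lowerCentralSeries m, (⊤ : Subgroup G).lowerCentralSeries n⁆, (⊤ : Subgroup G)⁆
          ≤ ⁅(⊤ : Subgroup G).lowerCentralSeries (m+n+1), (⊤ : Subgroup G)⁆ :=
            Subgroup.commutator_mono (ih m) le_rfl
      _ = (⊤ : Subgroup G).lowerCentralSeries (m + (n+1) + 1) := by
            rw [← lcs_succ']; congr 1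

lemma comm_central_left (c y w : G) (hc : ∀ g, Commute c g) :
    ⁅c * y, w⁆ = ⁅y, w⁆ := by
  have h1 : ⁅c * y, w⁆ = c * (y * w * y⁻¹) * (c⁻¹ * w⁻¹) := by group
  rw [h1, ((hc w).inv_inv).eq, ← mul_assoc,
    show c * (y * w * y⁻¹) * w⁻¹ = c * ⁅y, w⁆ by group, (hc ⁅y, w⁆).eq,
    mul_assoc, mul_inv_cancel, mul_one]

lemma comm_central_both (c d y z : G) (hc : ∀ g, Commute c g) (hd : ∀ g, Commute d g) :
    ⁅c * y, d * z⁆ = ⁅y, z⁆ := by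
  rw [comm_central_left c y (d*z) hc, ← commutatorElement_inv,
    comm_central_left d z y hd, commutatorElement_inv]

lemma flip_mem {N : Subgroup G} [hN : N.Normal] {a b : G} (h : a * b⁻¹ ∈ N) :
    a⁻¹ * b ∈ N := by
  have h1 : b * a⁻¹ ∈ N := by
    have := inv_mem h
    rwa [mul_inv_rev, inv_inv] at this
  exact hN.mem_comm h1

lemma mem_ker_autQuotMap_iff (s : ℕ) (φ : MulAut G) :
    φ ∈ (autQuotMap G s).ker ↔ ∀ x : G, φ x * x⁻¹ ∈ (⊤ : Subgroup G).lowerCentralSeries s := by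
  haveI : ((⊤ : Subgroup G).lowerCentralSeries s).Normal := inferInstance
  rw [MonoidHom.mem_ker]
  constructor
  · intro h x
    have h1 : ((autQuotMap G s) φ) ((x : G ⧸ (⊤ : Subgroup G).lowerCentralSeries s)) = (x : G ⧸ (⊤ : Subgroup G).lowerCentralSeries s) := by
      rw [h]; rfl
    have h2 : ((φ x : G) : G ⧸ (⊤ : Subgroup G).lowerCentralSeries s) = (x : G ⧸ (⊤ : Subgroup G).lowerCentralSeries s) := h1
    have h3 : (φ x)⁻¹ * x ∈ (⊤ : Subgroup G).lowerCentralSeries s := QuotientGroup.eq.mp h2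
    have h4 := inv_mem h3
    rw [mul_inv_rev, inv_inv] at h4
    exact this.mem_comm h4
  · intro h
    apply DFunLike.ext
    intro q
    induction q using QuotientGroup.induction_on with
    | H x =>
      show ((φ x : G) : G ⧸ (⊤ : Subgroup G).lowerCentralSeries s) = (x : G ⧸ (⊤ : Subgroup G).lowerCentralSeries s)
      exact QuotientGroup.eq.mpr (flip_mem (h x))

/-- Key lemma: if `φ` is trivial mod `γ_{s+1}`, then for `x ∈ γ_{a+1}` we have
`φ x ≡ x mod γ_{a+s+1}`. -/
lemma johnson_key {s : ℕ} {φ : MulAut G}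
    (hφ : ∀ x : G, φ x * x⁻¹ ∈ (⊤ : Subgroup G).lowerCentralSeries s) :
    ∀ (a : ℕ) (x : G), x ∈ (⊤ : Subgroup G).lowerCentralSeries a →
      φ x * x⁻¹ ∈ (⊤ : Subgroup G).lowerCentralSeries (a + s) := by
  intro a
  induction a with
  | zero => intro x _; simpa using hφ x
  | succ a ih =>
    set N := (⊤ : Subgroup G).lowerCentralSeries (a + 1 + s) with hNdef
    haveI hN : N.Normal := by rw [hNdef]; infer_instance
    -- centrality of γ_{a+s+1} and γ_{s+1} in G/N
    have hNe : (⊤ : Subgroup G).lowerCentralSeries (a + s + 1) = N := by rw [hNdef]; congr 1; omega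
    have central0 : ∀ (k : ℕ), (⊤ : Subgroup G).lowerCentralSeries (k+1) ≤ N →
        ∀ u : G, u ∈ (⊤ : Subgroup G).lowerCentralSeries k →
        ∀ g : G ⧸ N, Commute ((u : G ⧸ N)) g := by
      intro k hk u hu g
      induction g using QuotientGroup.induction_on with
      | H w =>
        rw [← commutatorElement_eq_one_iff_commute]
        have heq : ((⁅u, w⁆ : G) : G ⧸ N) = ⁅(u : G ⧸ N), (w : G ⧸ N)⁆ := by
          simp [commutatorElement_def]
        rw [← heq, ← QuotientGroup.mk_one, QuotientGroup.eq]
        have hm : ⁅u, w⁆ ∈ N := by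
          apply hk
          rw [lcs_succ']
          exact Subgroup.commutator_mem_commutator hu (Subgroup.mem_top w)
        simpa using inv_mem hm
    have central : ∀ u : G, u ∈ (⊤ : Subgroup G).lowerCentralSeries (a + s) →
        ∀ g : G ⧸ N, Commute ((u : G ⧸ N)) g :=
      central0 (a + s) hNe.le
    set S : Subgroup G :=
    { carrier := {x : G | φ x * x⁻¹ ∈ N}
      one_mem' := by simpa using one_mem N
      mul_mem' := by
        intro x y hx hy
        simp only [Set.mem_setOf_eq] at *
        have e : φ (x*y) * (x*y)⁻¹ = (φ x * x⁻¹) * (x * (φ y * y⁻¹) * x⁻¹) := by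
          rw [map_mul]; group
        rw [e]
        exact mul_mem hx (hN.conj_mem _ hy x)
      inv_mem' := by
        intro x hx
        simp only [Set.mem_setOf_eq] at *
        have e : φ x⁻¹ * (x⁻¹)⁻¹ = x⁻¹ * (φ x * x⁻¹)⁻¹ * (x⁻¹)⁻¹ := by
          rw [map_inv]; group
        rw [e]
        exact hN.conj_mem _ (inv_mem hx) x⁻¹ } with hSdef
    intro x hx
    suffices hS : (⊤ : Subgroup G).lowerCentralSeries (a+1) ≤ S from hS hx
    rw [lcs_succ', Subgroup.commutator_le]
    intro y hy z _
    show φ ⁅y, z⁆ * ⁅y, z⁆⁻¹ ∈ N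
    set u := φ y * y⁻¹ with hu
    set v := φ z * z⁻¹ with hv
    have hum : u ∈ (⊤ : Subgroup G).lowerCentralSeries (a + s) := ih y hy
    have hvm : v ∈ (⊤ : Subgroup G).lowerCentralSeries s := hφ z
    have hφy : φ y = u * y := by rw [hu]; group
    have hφz : φ z = v * z := by rw [hv]; group
    have hmk : ((φ ⁅y, z⁆ : G) : G ⧸ N) = ((⁅y, z⁆ : G) : G ⧸ N) := by
      have e1 : ∀ g h : G, ((⁅g, h⁆ : G) : G ⧸ N) = ⁅(g : G ⧸ N), (h : G ⧸ N)⁆ := by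
        intro g h; simp [commutatorElement_def]
      have hq1 : ((⁅y, v⁆ : G) : G ⧸ N) = 1 := by
        rw [QuotientGroup.eq_one_iff, ← hNe]
        exact lcs_comm s a (Subgroup.commutator_mem_commutator hy hvm)
      have hyz : ⁅y, z⁆ ∈ (⊤ : Subgroup G).lowerCentralSeries (a + 1) := by
        rw [lcs_succ']
        exact Subgroup.commutator_mem_commutator hy (Subgroup.mem_top z)
      have hq2 : ((⁅v, ⁅y, z⁆⁆ : G) : G ⧸ N) = 1 := by
        rw [QuotientGroup.eq_one_iff]
        have hmem := lcs_comm (a + 1) s (Subgroup.commutator_mem_commutator hvm hyz)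
        have hle : (⊤ : Subgroup G).lowerCentralSeries (s + (a + 1) + 1) ≤ N := by
          rw [hNdef]
          exact Subgroup.lowerCentralSeries_antitone (S := ⊤) (by omega : a + 1 + s ≤ s + (a + 1) + 1)
        exact hle hmem
      rw [map_commutatorElement, hφy, hφz, e1 (u * y) (v * z),
        QuotientGroup.mk_mul N u y, QuotientGroup.mk_mul N v z,
        comm_central_left _ _ _ (central u hum)]
      have idm : ∀ (Y V Z : G ⧸ N), ⁅Y, V * Z⁆ = ⁅Y, V⁆ * (V * ⁅Y, Z⁆ * V⁻¹) := by
        intros; group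
      have idm2 : ∀ (V X : G ⧸ N), V * X * V⁻¹ = ⁅V, X⁆ * X := by
        intros; group
      rw [idm, ← e1 y v, hq1, one_mul, idm2, ← e1 y z, ← e1 v ⁅y, z⁆, hq2, one_mul]
    have h3 : (φ ⁅y, z⁆)⁻¹ * ⁅y, z⁆ ∈ N := QuotientGroup.eq.mp hmk
    have h4 := inv_mem h3
    rw [mul_inv_rev, inv_inv] at h4
    exact hN.mem_comm h4

lemma swap_lemma {s t : ℕ} {φ ψ : MulAut G}
    (hφ : ∀ x : G, φ x * x⁻¹ ∈ (⊤ : Subgroup G).lowerCentralSeries s)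
    (hψ : ∀ x : G, ψ x * x⁻¹ ∈ (⊤ : Subgroup G).lowerCentralSeries t) (z : G) :
    φ (ψ z) * (ψ (φ z))⁻¹ ∈ (⊤ : Subgroup G).lowerCentralSeries (s + t) := by
  set a := φ z * z⁻¹ with ha
  set b := ψ z * z⁻¹ with hb
  have ham : a ∈ (⊤ : Subgroup G).lowerCentralSeries s := hφ z
  have hbm : b ∈ (⊤ : Subgroup G).lowerCentralSeries t := hψ z
  have hc : φ b * b⁻¹ ∈ (⊤ : Subgroup G).lowerCentralSeries (t + s) := johnson_key hφ t b hbm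
  have hc' : ψ a * a⁻¹ ∈ (⊤ : Subgroup G).lowerCentralSeries (s + t) := johnson_key hψ s a ham
  have hc2 : φ b * b⁻¹ ∈ (⊤ : Subgroup G).lowerCentralSeries (s + t) := by rwa [Nat.add_comm t s] at hc
  have hcomm : ⁅b, a⁆ ∈ (⊤ : Subgroup G).lowerCentralSeries (s + t) := by
    have h1 : ⁅b, a⁆ ∈ ⁅(⊤ : Subgroup G).lowerCentralSeries t, (⊤ : Subgroup G).lowerCentralSeries s⁆ :=
      Subgroup.commutator_mem_commutator hbm ham
    have h2 := lcs_comm s t h1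
    exact Subgroup.lowerCentralSeries_antitone (S := ⊤) (by omega : s + t ≤ t + s + 1) h2
  have key : φ (ψ z) * (ψ (φ z))⁻¹ = (φ b * b⁻¹) * ⁅b, a⁆ * (ψ a * a⁻¹)⁻¹ := by
    have e1 : φ (ψ z) = φ b * (φ z) := by
      rw [show ψ z = b * z by rw [hb]; group, map_mul]
    have e2 : ψ (φ z) = ψ a * (ψ z) := by
      rw [show φ z = a * z by rw [ha]; group, map_mul]
    rw [e1, e2, ha, hb]
    group
  rw [key]
  exact mul_mem (mul_mem hc2 hcomm) (inv_mem hc')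

end Aux

/-- `[J_n^s, J_n^t] ⊆ J_n^{s+t}` for all `s, t ≥ 1`; in
particular each quotient `J_n^s/J_n^{s+1}` is abelian, i.e. the commutator of
any two elements of `J_n^s` lies in `J_n^{s+1}`. -/
theorem johnsonFiltration_commutator (n s t : ℕ) (hs : 1 ≤ s) (ht : 1 ≤ t) :
    ⁅JohnsonFiltration n s, JohnsonFiltration n t⁆ ≤ JohnsonFiltration n (s + t) ∧
      ∀ φ ψ : MulAut (FreeGroup (Fin n)),
        φ ∈ JohnsonFiltration n s → ψ ∈ JohnsonFiltration n s →
          ⁅φ, ψ⁆ ∈ JohnsonFiltration n (s + 1) := by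
  have main : ∀ (s t : ℕ) (φ ψ : MulAut (FreeGroup (Fin n))),
      φ ∈ JohnsonFiltration n s → ψ ∈ JohnsonFiltration n t →
        ⁅φ, ψ⁆ ∈ JohnsonFiltration n (s + t) := by
    intro s t φ ψ hφ hψ
    have hφ' := (mem_ker_autQuotMap_iff s φ).mp hφ
    have hψ' := (mem_ker_autQuotMap_iff t ψ).mp hψ
    apply (mem_ker_autQuotMap_iff (s + t) ⁅φ, ψ⁆).mpr
    intro x
    set z := φ⁻¹ (ψ⁻¹ x) with hz
    have h1 : ⁅φ, ψ⁆ x = φ (ψ z) := rfl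
    have h2 : ψ (φ z) = x := by
      rw [hz]
      simp
    have := swap_lemma hφ' hψ' z
    rw [h2] at this
    rw [h1]
    exact this
  constructor
  · exact Subgroup.commutator_le.mpr fun φ hφ ψ hψ => main s t φ ψ hφ hψ
  · intro φ ψ hφ hψ
    have hψ1 : ψ ∈ JohnsonFiltration n 1 := by
      apply (mem_ker_autQuotMap_iff 1 ψ).mpr
      intro x
      exact Subgroup.lowerCentralSeries_antitone (S := ⊤) hs ((mem_ker_autQuotMap_iff s ψ).mp hψ x)
    exact main s 1 φ ψ hφ hψ1
end

section
/- Under the hypotheses of the Falk–Randell theorem (split exact sequence 1 → A → B → C → 1 with C acting trivially on H_1(A)), for each s ≥ 1 there is a short exact sequence of abelian groups 0 → Γ^s A/Γ^{s+1}A → Γ^s B/Γ^{s+1}B → Γ^s C/Γ^{s+1}C → 0 which is split. -/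
open Subgroup Pointwise
open scoped commutatorElement

private lemma FR_lcs_map {G H : Type*} [Group G] [Group H] (f : G →* H) (n : ℕ) :
    Subgroup.map f ((⊤ : Subgroup G).lowerCentralSeries n) ≤ (⊤ : Subgroup H).lowerCentralSeries n := by
  rw [Subgroup.map_lowerCentralSeries]
  induction n with
  | zero => exact le_top
  | succ n ih => exact Subgroup.commutator_mono ih le_top

/-- Three subgroups lemma relative to a normal subgroup. -/
private lemma FR_three_le {G : Type*} [Group G] {H₁ H₂ H₃ N : Subgroup G} [N.Normal]
    (h1 : ⁅⁅H₂, H₃⁆, H₁⁆ ≤ N) (h2 : ⁅⁅H₃, H₁⁆, H₂⁆ ≤ N) : ⁅⁅H₁, H₂⁆, H₃⁆ ≤ N := by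
  have key : ∀ {K L M : Subgroup G},
      (⁅⁅K, L⁆, M⁆ ≤ N ↔ ⁅⁅map (QuotientGroup.mk' N) K, map (QuotientGroup.mk' N) L⁆,
        map (QuotientGroup.mk' N) M⁆ = ⊥) := by
    intro K L M
    rw [← Subgroup.map_commutator, ← Subgroup.map_commutator, Subgroup.map_eq_bot_iff,
      QuotientGroup.ker_mk']
  rw [key]
  exact Subgroup.commutator_commutator_eq_bot_of_rotate (key.mp h1) (key.mp h2)

private lemma FR_lcs_comm {G : Type*} [Group G] :
    ∀ (n m : ℕ), ⁅(⊤ : Subgroup G).lowerCentralSeries m, (⊤ : Subgroup G).lowerCentralSeries n⁆ ≤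
      (⊤ : Subgroup G).lowerCentralSeries (m + n + 1) := by
  intro n
  induction n with
  | zero => intro m; exact le_of_eq rfl
  | succ n ih =>
    intro m
    have h : (⊤ : Subgroup G).lowerCentralSeries (n+1) = ⁅(⊤ : Subgroup G).lowerCentralSeries n, ⊤⁆ := rfl
    rw [h, Subgroup.commutator_comm]
    have : m + (n+1) + 1 = (m + n + 1) + 1 := by omega
    rw [this]
    refine FR_three_le ?_ ?_
    · rw [Subgroup.commutator_comm (⊤ : Subgroup G)]
      calc ⁅⁅(⊤ : Subgroup G).lowerCentralSeries m, ⊤⁆, (⊤ : Subgroup G).lowerCentralSeries n⁆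
          = ⁅(⊤ : Subgroup G).lowerCentralSeries (m+1), (⊤ : Subgroup G).lowerCentralSeries n⁆ := rfl
        _ ≤ (⊤ : Subgroup G).lowerCentralSeries ((m+1) + n + 1) := ih (m+1)
        _ = (⊤ : Subgroup G).lowerCentralSeries ((m + n + 1) + 1) := by ring_nf
    · calc ⁅⁅(⊤ : Subgroup G).lowerCentralSeries m, (⊤ : Subgroup G).lowerCentralSeries n⁆, ⊤⁆
          ≤ ⁅(⊤ : Subgroup G).lowerCentralSeries (m + n + 1), ⊤⁆ :=
            Subgroup.commutator_mono (ih m) le_rfl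
        _ = (⊤ : Subgroup G).lowerCentralSeries ((m + n + 1) + 1) := rfl

section FRcore
variable {A B C : Type*} [Group A] [Group B] [Group C]
  (i : A →* B) (π : B →* C) (σ : C →* B)

/-- `i(Γ^s A)` is normal in `B`. -/
private lemma FR_normal (hi : Function.Injective i) (hexact : i.range = π.ker) (s : ℕ) :
    (Subgroup.map i ((⊤ : Subgroup A).lowerCentralSeries s)).Normal := by
  constructor
  intro x hx b
  obtain ⟨a, ha, rfl⟩ := hx
  have hmem : ∀ a : A, b * i a * b⁻¹ ∈ i.range := by
    intro a
    rw [hexact, MonoidHom.mem_ker]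
    have : π (i a) = 1 := by
      rw [← MonoidHom.mem_ker, ← hexact]; exact ⟨a, rfl⟩
    simp [this]
  choose φ hφ using hmem
  have hhom : ∀ a₁ a₂ : A, φ (a₁ * a₂) = φ a₁ * φ a₂ := by
    intro a₁ a₂
    apply hi
    rw [map_mul, hφ, hφ, hφ, map_mul]
    group
  have hmap := FR_lcs_map (MonoidHom.mk' φ hhom) s
  exact ⟨φ a, hmap ⟨a, ha, rfl⟩, hφ a⟩

variable (haction : ⁅i.range, (⊤ : Subgroup B)⁆ ≤
      Subgroup.map i ⁅(⊤ : Subgroup A), (⊤ : Subgroup A)⁆)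

include haction

private lemma FR_base (hi : Function.Injective i) (hexact : i.range = π.ker) :
    ⁅Subgroup.map i ((⊤ : Subgroup A).lowerCentralSeries 0), (⊤ : Subgroup B)⁆ ≤
      Subgroup.map i ((⊤ : Subgroup A).lowerCentralSeries 1) := by
  rw [Subgroup.lowerCentralSeries_zero, ← MonoidHom.range_eq_map]
  exact haction

/-- Lemma A : `⁅i(Γ^s A), B⁆ ≤ i(Γ^{s+1} A)`. -/
private lemma FR_lemA (hi : Function.Injective i) (hexact : i.range = π.ker) :
    ∀ s : ℕ, ⁅Subgroup.map i ((⊤ : Subgroup A).lowerCentralSeries s), (⊤ : Subgroup B)⁆ ≤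
      Subgroup.map i ((⊤ : Subgroup A).lowerCentralSeries (s + 1)) := by
  intro s
  induction s with
  | zero => exact FR_base i π haction hi hexact
  | succ s ih =>
    have hrw : Subgroup.map i ((⊤ : Subgroup A).lowerCentralSeries (s+1)) =
        ⁅Subgroup.map i ((⊤ : Subgroup A).lowerCentralSeries s), Subgroup.map i ⊤⁆ := by
      rw [← Subgroup.map_commutator]; rfl
    rw [hrw]
    have : (Subgroup.map i ((⊤ : Subgroup A).lowerCentralSeries (s+2))).Normal := FR_normal i π hi hexact _
    refine FR_three_le ?_ ?_
    · -- ⁅⁅i ⊤, ⊤⁆, i Γs⁆ ≤ i Γ(s+2)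
      calc ⁅⁅Subgroup.map i ⊤, (⊤ : Subgroup B)⁆, Subgroup.map i ((⊤ : Subgroup A).lowerCentralSeries s)⁆
          ≤ ⁅Subgroup.map i ((⊤ : Subgroup A).lowerCentralSeries 1),
              Subgroup.map i ((⊤ : Subgroup A).lowerCentralSeries s)⁆ := by
            refine Subgroup.commutator_mono ?_ le_rfl
            have := FR_base i π haction hi hexact
            rwa [Subgroup.lowerCentralSeries_zero] at this
        _ = Subgroup.map i ⁅(⊤ : Subgroup A).lowerCentralSeries 1, (⊤ : Subgroup A).lowerCentralSeries s⁆ :=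
            (Subgroup.map_commutator _ _ _).symm
        _ ≤ Subgroup.map i ((⊤ : Subgroup A).lowerCentralSeries (s + 2)) := by
            refine Subgroup.map_mono ?_
            have h2 := FR_lcs_comm (G := A) s 1
            have : (1 : ℕ) + s + 1 = s + 2 := by omega
            rwa [this] at h2
    · -- ⁅⁅⊤, i Γs⁆, i ⊤⁆ ≤ i Γ(s+2)
      calc ⁅⁅(⊤ : Subgroup B), Subgroup.map i ((⊤ : Subgroup A).lowerCentralSeries s)⁆, Subgroup.map i ⊤⁆
          = ⁅⁅Subgroup.map i ((⊤ : Subgroup A).lowerCentralSeries s), (⊤ : Subgroup B)⁆, Subgroup.map i ⊤⁆ := by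
            rw [Subgroup.commutator_comm (⊤ : Subgroup B)]
        _ ≤ ⁅Subgroup.map i ((⊤ : Subgroup A).lowerCentralSeries (s+1)), Subgroup.map i ⊤⁆ :=
            Subgroup.commutator_mono ih le_rfl
        _ = Subgroup.map i ⁅(⊤ : Subgroup A).lowerCentralSeries (s+1), ⊤⁆ :=
            (Subgroup.map_commutator _ _ _).symm
        _ = Subgroup.map i ((⊤ : Subgroup A).lowerCentralSeries (s + 2)) := rfl

/-- Lemma B : `⁅i(Γ^m A), Γ^s B⁆ ≤ i(Γ^{m+s+1} A)`. -/
private lemma FR_lemB (hi : Function.Injective i) (hexact : i.range = π.ker) :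
    ∀ s m : ℕ, ⁅Subgroup.map i ((⊤ : Subgroup A).lowerCentralSeries m), (⊤ : Subgroup B).lowerCentralSeries s⁆ ≤
      Subgroup.map i ((⊤ : Subgroup A).lowerCentralSeries (m + s + 1)) := by
  intro s
  induction s with
  | zero =>
    intro m
    simpa using FR_lemA i π haction hi hexact m
  | succ s ih =>
    intro m
    have hrw : (⊤ : Subgroup B).lowerCentralSeries (s+1) = ⁅(⊤ : Subgroup B).lowerCentralSeries s, ⊤⁆ := rfl
    rw [hrw, Subgroup.commutator_comm]
    have hidx : m + (s+1) + 1 = m + s + 2 := by omega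
    rw [hidx]
    have : (Subgroup.map i ((⊤ : Subgroup A).lowerCentralSeries (m+s+2))).Normal := FR_normal i π hi hexact _
    refine FR_three_le ?_ ?_
    · -- ⁅⁅⊤, i Γm⁆, Γs B⁆
      calc ⁅⁅(⊤ : Subgroup B), Subgroup.map i ((⊤ : Subgroup A).lowerCentralSeries m)⁆, (⊤ : Subgroup B).lowerCentralSeries s⁆
          = ⁅⁅Subgroup.map i ((⊤ : Subgroup A).lowerCentralSeries m), (⊤ : Subgroup B)⁆, (⊤ : Subgroup B).lowerCentralSeries s⁆ := by
            rw [Subgroup.commutator_comm (⊤ : Subgroup B)]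
        _ ≤ ⁅Subgroup.map i ((⊤ : Subgroup A).lowerCentralSeries (m+1)), (⊤ : Subgroup B).lowerCentralSeries s⁆ :=
            Subgroup.commutator_mono (FR_lemA i π haction hi hexact m) le_rfl
        _ ≤ Subgroup.map i ((⊤ : Subgroup A).lowerCentralSeries ((m+1) + s + 1)) := ih (m+1)
        _ = Subgroup.map i ((⊤ : Subgroup A).lowerCentralSeries (m + s + 2)) := by ring_nf
    · calc ⁅⁅Subgroup.map i ((⊤ : Subgroup A).lowerCentralSeries m), (⊤ : Subgroup B).lowerCentralSeries s⁆, (⊤ : Subgroup B)⁆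
          ≤ ⁅Subgroup.map i ((⊤ : Subgroup A).lowerCentralSeries (m + s + 1)), (⊤ : Subgroup B)⁆ :=
            Subgroup.commutator_mono (ih m) le_rfl
        _ ≤ Subgroup.map i ((⊤ : Subgroup A).lowerCentralSeries (m + s + 2)) :=
            FR_lemA i π haction hi hexact (m+s+1)

end FRcore

private lemma FR_comm_aux {Q : Type*} [Group Q] (u v u' v' : Q)
    (h1 : ∀ g : Q, u * g = g * u)
    (h2 : v * u' = u' * v)
    (h3 : u' * ⁅v, v'⁆ = ⁅v, v'⁆ * u') :
    ⁅u * v, u' * v'⁆ = ⁅v, v'⁆ := by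
  simp only [commutatorElement_def] at h3 ⊢
  calc u * v * (u' * v') * (u * v)⁻¹ * (u' * v')⁻¹
      = u * (v * (u' * v') * v⁻¹) * u⁻¹ * (v'⁻¹ * u'⁻¹) := by group
    _ = (v * (u' * v') * v⁻¹) * u * u⁻¹ * (v'⁻¹ * u'⁻¹) := by
        rw [h1 (v * (u' * v') * v⁻¹)]
    _ = (v * u') * (v' * v⁻¹ * v'⁻¹ * u'⁻¹) := by group
    _ = (u' * v) * (v' * v⁻¹ * v'⁻¹ * u'⁻¹) := by rw [h2]
    _ = u' * (v * v' * v⁻¹ * v'⁻¹) * u'⁻¹ := by group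
    _ = (v * v' * v⁻¹ * v'⁻¹) * u' * u'⁻¹ := by rw [h3]
    _ = v * v' * v⁻¹ * v'⁻¹ := by group

section FRdecomp
variable {A B C : Type*} [Group A] [Group B] [Group C]
  (i : A →* B) (π : B →* C) (σ : C →* B)

/-- The decomposition `Γ^s B ≤ i(Γ^s A) ⊔ σ(Γ^s C)`. -/
private lemma FR_decomp (hi : Function.Injective i) (hexact : i.range = π.ker)
    (hsplit : ∀ c : C, π (σ c) = c)
    (haction : ⁅i.range, (⊤ : Subgroup B)⁆ ≤
      Subgroup.map i ⁅(⊤ : Subgroup A), (⊤ : Subgroup A)⁆) :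
    ∀ s : ℕ, (⊤ : Subgroup B).lowerCentralSeries s ≤
      Subgroup.map i ((⊤ : Subgroup A).lowerCentralSeries s) ⊔ Subgroup.map σ ((⊤ : Subgroup C).lowerCentralSeries s) := by
  intro s
  induction s with
  | zero =>
    intro x _
    have h1 : x * (σ (π x))⁻¹ ∈ Subgroup.map i ((⊤ : Subgroup A).lowerCentralSeries 0) := by
      rw [Subgroup.lowerCentralSeries_zero, ← MonoidHom.range_eq_map, hexact, MonoidHom.mem_ker]
      simp [hsplit]
    have h2 : σ (π x) ∈ Subgroup.map σ ((⊤ : Subgroup C).lowerCentralSeries 0) := ⟨π x, trivial, rfl⟩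
    have hx : x = (x * (σ (π x))⁻¹) * σ (π x) := by group
    rw [hx]
    exact mul_mem (mem_sup_left h1) (mem_sup_right h2)
  | succ s ih =>
    have hrw : (⊤ : Subgroup B).lowerCentralSeries (s+1) = ⁅(⊤ : Subgroup B).lowerCentralSeries s, ⊤⁆ := rfl
    rw [hrw, Subgroup.commutator_le]
    intro x hx y _
    -- decompose x
    have hNs : (Subgroup.map i ((⊤ : Subgroup A).lowerCentralSeries s)).Normal := FR_normal i π hi hexact s
    have hx' : x ∈ (Subgroup.map i ((⊤ : Subgroup A).lowerCentralSeries s) : Set B) *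
        (Subgroup.map σ ((⊤ : Subgroup C).lowerCentralSeries s) : Set B) := by
      rw [← Subgroup.normal_mul]
      exact ih hx
    obtain ⟨u, hu, v, hv, rfl⟩ := hx'
    obtain ⟨a, ha, rfl⟩ := hu
    obtain ⟨c, hc, rfl⟩ := hv
    -- decompose y
    set u' : B := y * (σ (π y))⁻¹ with hu'def
    set v' : B := σ (π y) with hv'def
    have hy : y = u' * v' := by rw [hu'def, hv'def]; group
    -- the normal subgroup we quotient by
    set N : Subgroup B := Subgroup.map i ((⊤ : Subgroup A).lowerCentralSeries (s+1)) with hNdef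
    have hNnormal : N.Normal := FR_normal i π hi hexact (s+1)
    -- helper: commuting modulo N
    have comm_of_mem : ∀ p q : B, ⁅p, q⁆ ∈ N →
        ((p : B ⧸ N) * (q : B ⧸ N) = (q : B ⧸ N) * (p : B ⧸ N)) := by
      intro p q h
      rw [← QuotientGroup.mk_mul, ← QuotientGroup.mk_mul, QuotientGroup.eq]
      have hid : (p * q)⁻¹ * (q * p) = (q * p)⁻¹ * ⁅p, q⁆⁻¹ * ((q * p)⁻¹)⁻¹ := by
        simp only [commutatorElement_def]; group
      rw [hid]
      exact hNnormal.conj_mem _ (N.inv_mem h) _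
    -- memberships needed
    have hσc : σ c ∈ (⊤ : Subgroup B).lowerCentralSeries s := FR_lcs_map σ s ⟨c, hc, rfl⟩
    have hu'range : u' ∈ i.range := by
      rw [hexact, MonoidHom.mem_ker, hu'def]; simp [hsplit, hv'def]
    have hu'map : u' ∈ Subgroup.map i ((⊤ : Subgroup A).lowerCentralSeries 0) := by
      rw [Subgroup.lowerCentralSeries_zero, ← MonoidHom.range_eq_map]; exact hu'range
    have hσcc' : ⁅σ c, v'⁆ = σ ⁅c, π y⁆ := by
      rw [hv'def]
      simp [commutatorElement_def, map_mul, map_inv]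
    have hcc' : ⁅c, π y⁆ ∈ (⊤ : Subgroup C).lowerCentralSeries (s+1) :=
      Subgroup.commutator_mem_commutator hc (mem_top _)
    have hσccB : ⁅σ c, v'⁆ ∈ (⊤ : Subgroup B).lowerCentralSeries (s+1) := by
      rw [hσcc']
      exact FR_lcs_map σ (s+1) ⟨⁅c, π y⁆, hcc', rfl⟩
    -- quotient computation
    have key : ((⁅i a * σ c, y⁆ : B) : B ⧸ N) = ((σ ⁅c, π y⁆ : B) : B ⧸ N) := by
      have hmk : ((⁅i a * σ c, y⁆ : B) : B ⧸ N) =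
          ⁅((i a : B) : B ⧸ N) * ((σ c : B) : B ⧸ N),
           ((u' : B) : B ⧸ N) * ((v' : B) : B ⧸ N)⁆ := by
        rw [hy]; rfl
      rw [hmk, FR_comm_aux, ← hσcc']
      · rfl
      · -- i a is central mod N
        intro g
        refine QuotientGroup.induction_on g ?_
        intro g
        refine comm_of_mem _ _ ?_
        exact FR_lemA i π haction hi hexact s
          (Subgroup.commutator_mem_commutator ⟨a, ha, rfl⟩ (mem_top _))
      · -- σ c commutes with u' mod N
        refine comm_of_mem _ _ ?_
        have h0 : ⁅u', σ c⁆ ∈ ⁅Subgroup.map i ((⊤ : Subgroup A).lowerCentralSeries 0), (⊤ : Subgroup B).lowerCentralSeries s⁆ :=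
          Subgroup.commutator_mem_commutator hu'map hσc
        have h1 := FR_lemB i π haction hi hexact s 0 h0
        have hidx : (0 : ℕ) + s + 1 = s + 1 := by omega
        rw [hidx] at h1
        rw [← commutatorElement_inv]
        exact N.inv_mem h1
      · -- u' commutes with ⁅σ c, v'⁆ mod N
        have hq : (⁅((σ c : B) : B ⧸ N), ((v' : B) : B ⧸ N)⁆ : B ⧸ N) =
            ((⁅σ c, v'⁆ : B) : B ⧸ N) := rfl
        rw [hq]
        refine comm_of_mem _ _ ?_
        have h0 : ⁅u', ⁅σ c, v'⁆⁆ ∈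
            ⁅Subgroup.map i ((⊤ : Subgroup A).lowerCentralSeries 0), (⊤ : Subgroup B).lowerCentralSeries (s+1)⁆ :=
          Subgroup.commutator_mem_commutator hu'map hσccB
        have h1 := FR_lemB i π haction hi hexact (s+1) 0 h0
        have hidx : (0 : ℕ) + (s+1) + 1 = s + 2 := by omega
        rw [hidx] at h1
        exact Subgroup.map_mono (Subgroup.lowerCentralSeries_antitone (⊤ : Subgroup A) (by omega)) h1
    -- conclude
    rw [QuotientGroup.eq] at key
    have hfin : ⁅i a * σ c, y⁆ = σ ⁅c, π y⁆ * (⁅i a * σ c, y⁆⁻¹ * σ ⁅c, π y⁆)⁻¹ := by group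
    rw [hfin]
    refine mul_mem (mem_sup_right ⟨⁅c, π y⁆, hcc', rfl⟩) (mem_sup_left ?_)
    exact N.inv_mem key

end FRdecomp



/-- Falk–Randell, graded version: under the hypotheses of the
Falk–Randell theorem (split exact sequence `1 → A → B → C → 1` with `C` acting
trivially on `H_1(A)`), for each `s` there is a split short exact sequence of
the graded quotients `0 → Γ^s A/Γ^{s+1}A → Γ^s B/Γ^{s+1}B → Γ^s C/Γ^{s+1}C → 0`,
where the maps `f` and `g` are induced by `i` and `π` respectively and `σ'` is a
group-theoretic section of `g`.  (Mathlib indexing: `Γ^{s}` for `s ≥ 1` is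
`lowerCentralSeries _ (s-1)`, so we quantify over all Mathlib indices `s`.) -/
theorem falk_randell_graded_split_exact
    {A B C : Type*} [Group A] [Group B] [Group C]
    (i : A →* B) (π : B →* C) (σ : C →* B)
    (hi : Function.Injective i) (hexact : i.range = π.ker)
    (hsplit : ∀ c : C, π (σ c) = c)
    (haction : ⁅i.range, (⊤ : Subgroup B)⁆ ≤
      Subgroup.map i ⁅(⊤ : Subgroup A), (⊤ : Subgroup A)⁆)
    (s : ℕ) :
    ∃ (f : ((⊤ : Subgroup A).lowerCentralSeries s ⧸
            ((⊤ : Subgroup A).lowerCentralSeries (s+1)).subgroupOf ((⊤ : Subgroup A).lowerCentralSeries s)) →*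
           ((⊤ : Subgroup B).lowerCentralSeries s ⧸
            ((⊤ : Subgroup B).lowerCentralSeries (s+1)).subgroupOf ((⊤ : Subgroup B).lowerCentralSeries s)))
      (g : ((⊤ : Subgroup B).lowerCentralSeries s ⧸
            ((⊤ : Subgroup B).lowerCentralSeries (s+1)).subgroupOf ((⊤ : Subgroup B).lowerCentralSeries s)) →*
           ((⊤ : Subgroup C).lowerCentralSeries s ⧸
            ((⊤ : Subgroup C).lowerCentralSeries (s+1)).subgroupOf ((⊤ : Subgroup C).lowerCentralSeries s)))
      (σ' : ((⊤ : Subgroup C).lowerCentralSeries s ⧸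
            ((⊤ : Subgroup C).lowerCentralSeries (s+1)).subgroupOf ((⊤ : Subgroup C).lowerCentralSeries s)) →*
           ((⊤ : Subgroup B).lowerCentralSeries s ⧸
            ((⊤ : Subgroup B).lowerCentralSeries (s+1)).subgroupOf ((⊤ : Subgroup B).lowerCentralSeries s))),
      -- `f` is induced by `i`:
      (∀ (a : (⊤ : Subgroup A).lowerCentralSeries s) (b : (⊤ : Subgroup B).lowerCentralSeries s),
        (b : B) = i a → f (QuotientGroup.mk a) = QuotientGroup.mk b) ∧
      -- `g` is induced by `π`:
      (∀ (b : (⊤ : Subgroup B).lowerCentralSeries s) (c : (⊤ : Subgroup C).lowerCentralSeries s),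
        (c : C) = π b → g (QuotientGroup.mk b) = QuotientGroup.mk c) ∧
      -- exactness `0 → ⬝ → ⬝ → ⬝ → 0`:
      Function.Injective f ∧ f.range = g.ker ∧ Function.Surjective g ∧
      -- the sequence is split:
      (∀ x, g (σ' x) = x) := by
  classical
  have hπi : ∀ a : A, π (i a) = 1 := by
    intro a
    rw [← MonoidHom.mem_ker, ← hexact]
    exact ⟨a, rfl⟩
  -- the restricted maps
  let i_s : (⊤ : Subgroup A).lowerCentralSeries s →* (⊤ : Subgroup B).lowerCentralSeries s :=
    (i.comp ((⊤ : Subgroup A).lowerCentralSeries s).subtype).codRestrict _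
      (fun a => FR_lcs_map i s ⟨a, a.2, rfl⟩)
  let π_s : (⊤ : Subgroup B).lowerCentralSeries s →* (⊤ : Subgroup C).lowerCentralSeries s :=
    (π.comp ((⊤ : Subgroup B).lowerCentralSeries s).subtype).codRestrict _
      (fun b => FR_lcs_map π s ⟨b, b.2, rfl⟩)
  let σ_s : (⊤ : Subgroup C).lowerCentralSeries s →* (⊤ : Subgroup B).lowerCentralSeries s :=
    (σ.comp ((⊤ : Subgroup C).lowerCentralSeries s).subtype).codRestrict _
      (fun c => FR_lcs_map σ s ⟨c, c.2, rfl⟩)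
  have hi_s : ∀ a : (⊤ : Subgroup A).lowerCentralSeries s, (i_s a : B) = i a := fun _ => rfl
  have hπ_s : ∀ b : (⊤ : Subgroup B).lowerCentralSeries s, (π_s b : C) = π b := fun _ => rfl
  have hσ_s : ∀ c : (⊤ : Subgroup C).lowerCentralSeries s, (σ_s c : B) = σ c := fun _ => rfl
  have hcompf : ((⊤ : Subgroup A).lowerCentralSeries (s+1)).subgroupOf ((⊤ : Subgroup A).lowerCentralSeries s) ≤
      Subgroup.comap i_s
        (((⊤ : Subgroup B).lowerCentralSeries (s+1)).subgroupOf ((⊤ : Subgroup B).lowerCentralSeries s)) := by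
    intro x hx
    rw [Subgroup.mem_subgroupOf] at hx
    rw [Subgroup.mem_comap, Subgroup.mem_subgroupOf, hi_s]
    exact FR_lcs_map i (s+1) ⟨x, hx, rfl⟩
  have hcompg : ((⊤ : Subgroup B).lowerCentralSeries (s+1)).subgroupOf ((⊤ : Subgroup B).lowerCentralSeries s) ≤
      Subgroup.comap π_s
        (((⊤ : Subgroup C).lowerCentralSeries (s+1)).subgroupOf ((⊤ : Subgroup C).lowerCentralSeries s)) := by
    intro x hx
    rw [Subgroup.mem_subgroupOf] at hx
    rw [Subgroup.mem_comap, Subgroup.mem_subgroupOf, hπ_s]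
    exact FR_lcs_map π (s+1) ⟨x, hx, rfl⟩
  have hcompσ : ((⊤ : Subgroup C).lowerCentralSeries (s+1)).subgroupOf ((⊤ : Subgroup C).lowerCentralSeries s) ≤
      Subgroup.comap σ_s
        (((⊤ : Subgroup B).lowerCentralSeries (s+1)).subgroupOf ((⊤ : Subgroup B).lowerCentralSeries s)) := by
    intro x hx
    rw [Subgroup.mem_subgroupOf] at hx
    rw [Subgroup.mem_comap, Subgroup.mem_subgroupOf, hσ_s]
    exact FR_lcs_map σ (s+1) ⟨x, hx, rfl⟩
  refine ⟨QuotientGroup.map _ _ i_s hcompf, QuotientGroup.map _ _ π_s hcompg,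
    QuotientGroup.map _ _ σ_s hcompσ, ?_, ?_, ?_, ?_, ?_, ?_⟩
  · -- f induced by i
    intro a b hb
    rw [QuotientGroup.map_mk]
    congr 1
    exact Subtype.ext (by rw [hi_s, hb])
  · -- g induced by π
    intro b c hc
    rw [QuotientGroup.map_mk]
    congr 1
    exact Subtype.ext (by rw [hπ_s, hc])
  · -- f injective
    rw [← MonoidHom.ker_eq_bot_iff, eq_bot_iff]
    intro x hx
    obtain ⟨a, rfl⟩ := QuotientGroup.mk_surjective x
    rw [MonoidHom.mem_ker, QuotientGroup.map_mk, QuotientGroup.eq_one_iff,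
      Subgroup.mem_subgroupOf, hi_s] at hx
    rw [Subgroup.mem_bot, QuotientGroup.eq_one_iff, Subgroup.mem_subgroupOf]
    -- i ↑a ∈ Γ^{s+1} B and π (i ↑a) = 1, so ↑a ∈ Γ^{s+1} A
    have hmem := FR_decomp i π σ hi hexact hsplit haction (s+1) hx
    have hNs : (Subgroup.map i ((⊤ : Subgroup A).lowerCentralSeries (s+1))).Normal :=
      FR_normal i π hi hexact (s+1)
    rw [← SetLike.mem_coe, Subgroup.normal_mul] at hmem
    obtain ⟨u, hu, v, hv, huv⟩ := hmem
    obtain ⟨a₁, ha₁, rfl⟩ := hu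
    obtain ⟨c₁, hc₁, rfl⟩ := hv
    have hc1 : c₁ = 1 := by
      have := congrArg π huv
      rw [map_mul, hπi, hπi, hsplit, one_mul] at this
      exact this
    simp only [hc1, map_one, mul_one] at huv
    have : (a : A) = a₁ := hi huv.symm
    rw [this]
    exact ha₁
  · -- range f = ker g
    ext x
    constructor
    · rintro ⟨w, rfl⟩
      obtain ⟨a, rfl⟩ := QuotientGroup.mk_surjective w
      rw [MonoidHom.mem_ker, QuotientGroup.map_mk, QuotientGroup.map_mk,
        QuotientGroup.eq_one_iff, Subgroup.mem_subgroupOf, hπ_s, hi_s, hπi]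
      exact one_mem _
    · intro hx
      obtain ⟨b, rfl⟩ := QuotientGroup.mk_surjective x
      rw [MonoidHom.mem_ker, QuotientGroup.map_mk, QuotientGroup.eq_one_iff,
        Subgroup.mem_subgroupOf, hπ_s] at hx
      -- b₀ := b * (σ (π b))⁻¹ lies in Γ^s B ∩ ker π
      have hσπb : σ (π (b : B)) ∈ (⊤ : Subgroup B).lowerCentralSeries (s+1) :=
        FR_lcs_map σ (s+1) ⟨π (b : B), hx, rfl⟩
      have hσπbs : σ (π (b : B)) ∈ (⊤ : Subgroup B).lowerCentralSeries s :=
        Subgroup.lowerCentralSeries_antitone (⊤ : Subgroup B) (Nat.le_succ s) hσπb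
      set b₀ : B := (b : B) * (σ (π (b : B)))⁻¹ with hb₀def
      have hb₀B : b₀ ∈ (⊤ : Subgroup B).lowerCentralSeries s := mul_mem b.2 (inv_mem hσπbs)
      have hb₀ker : π b₀ = 1 := by rw [hb₀def]; simp [hsplit]
      have hmem := FR_decomp i π σ hi hexact hsplit haction s hb₀B
      have hNs : (Subgroup.map i ((⊤ : Subgroup A).lowerCentralSeries s)).Normal :=
        FR_normal i π hi hexact s
      rw [← SetLike.mem_coe, Subgroup.normal_mul] at hmem
      obtain ⟨u, hu, v, hv, huv⟩ := hmem
      obtain ⟨a₁, ha₁, rfl⟩ := hu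
      obtain ⟨c₁, hc₁, rfl⟩ := hv
      have hc1 : c₁ = 1 := by
        have := congrArg π huv
        rw [map_mul, hπi, hsplit, one_mul, hb₀ker] at this
        exact this
      simp only [hc1, map_one, mul_one] at huv
      -- huv : i a₁ = b₀
      refine ⟨QuotientGroup.mk ⟨a₁, ha₁⟩, ?_⟩
      rw [QuotientGroup.map_mk]
      have : i_s ⟨a₁, ha₁⟩ = ⟨b₀, hb₀B⟩ := Subtype.ext (by rw [hi_s]; exact huv)
      rw [this]
      rw [QuotientGroup.eq, Subgroup.mem_subgroupOf]
      show ((⟨b₀, hb₀B⟩ : (⊤ : Subgroup B).lowerCentralSeries s)⁻¹ * b : B) ∈ (⊤ : Subgroup B).lowerCentralSeries (s+1)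
      have : ((⟨b₀, hb₀B⟩ : (⊤ : Subgroup B).lowerCentralSeries s)⁻¹ * b : B) = σ (π (b : B)) := by
        show b₀⁻¹ * (b : B) = σ (π (b : B))
        rw [hb₀def]; group
      rw [this]
      exact hσπb
  · -- g surjective
    intro x
    obtain ⟨c, rfl⟩ := QuotientGroup.mk_surjective x
    refine ⟨QuotientGroup.mk (σ_s c), ?_⟩
    rw [QuotientGroup.map_mk]
    congr 1
    exact Subtype.ext (by rw [hπ_s, hσ_s, hsplit])
  · -- section property
    intro x
    obtain ⟨c, rfl⟩ := QuotientGroup.mk_surjective x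
    rw [QuotientGroup.map_mk, QuotientGroup.map_mk]
    congr 1
    exact Subtype.ext (by rw [hπ_s, hσ_s, hsplit])
end
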